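/- For every integer j ≥ 2, P(j) = (8 - 16j³ - 8j⁴ + 15j⁶ + j⁷)/(8 - 16j³ - 16j⁴ + 32j⁷) is strictly positive. -/

import Mathlib

/-!
In the variable `t = j - 1` both polynomials have nonnegative coefficients:
the numerator is `17 t + 150 t² + 287 t³ + 252 t⁴ + 111 t⁵ + 22 t⁶ + t⁷` and the denominator is
`8 + 112 t + 528 t² + 1040 t³ + 1104 t⁴ + 672 t⁵ + 224 t⁶ + 32 t⁷`,
so the numerator is positive for `j > 1` and the denominator for `j ≥ 1`.
-/

namespace Casimir

def pressureNumerator (x : ℝ) : ℝ := 8 - 16 * x ^ 3 - 8 * x ^ 4 + 15 * x ^ 6 + x ^ 7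

def pressureDenominator (x : ℝ) : ℝ := 8 - 16 * x ^ 3 - 16 * x ^ 4 + 32 * x ^ 7

theorem pressureNumerator_pos {x : ℝ} (hx : 1 < x) : 0 < pressureNumerator x := by
  obtain ⟨t, ht, rfl⟩ : ∃ t : ℝ, 0 < t ∧ t + 1 = x := ⟨x - 1, by linarith, by ring⟩
  unfold pressureNumerator
  ring_nf
  positivity

theorem pressureDenominator_pos {x : ℝ} (hx : 1 ≤ x) : 0 < pressureDenominator x := by
  obtain ⟨t, ht, rfl⟩ : ∃ t : ℝ, 0 ≤ t ∧ t + 1 = x := ⟨x - 1, by linarith, by ring⟩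
  unfold pressureDenominator
  ring_nf
  positivity

end Casimir

theorem casimir_pressure_coefficient_pos (j : ℤ) (hj : 2 ≤ j) :
    0 < ((8 : ℝ) - 16 * (j : ℝ) ^ 3 - 8 * (j : ℝ) ^ 4 + 15 * (j : ℝ) ^ 6 + (j : ℝ) ^ 7) /
          ((8 : ℝ) - 16 * (j : ℝ) ^ 3 - 16 * (j : ℝ) ^ 4 + 32 * (j : ℝ) ^ 7) := by
  have hj₁ : (1 : ℝ) < j := by exact_mod_cast hj
  exact div_pos (Casimir.pressureNumerator_pos hj₁) (Casimir.pressureDenominator_pos hj₁.le)
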